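/- arXiv:1705.08855 — 2 statements merged into one kernel-verified Lean document; each statement's English description precedes it below -/
import Mathlib

section
/- Let a be a fixed even positive integer and let r : ℕ → ℕ satisfy r(k) = o(k^{1/2}) as k → ∞. Then E[|X_{k+r(k)} − Y_k|^a] = Θ(k^{a/2})/λ^a; that is, there exist constants c_1, c_2 > 0 and K (independent of λ) such that for all λ > 0 and all k ≥ K, c_1 · k^{a/2}/λ^a ≤ E[|X_{k+r(k)} − Y_k|^a] ≤ c_2 · k^{a/2}/λ^a. -/
/-
Write `∑_{i < k + r} ξ i - ∑_{i < k} τ i = S + r`, where `S` is the sum of the `n = 2k + r`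
independent centred variables `ξ i - 1` and `1 - τ i`. In the multinomial expansion of
`E[S^(2m)]` independence factorises every term, and a term in which some variable occurs exactly
once vanishes; the surviving terms involve at most `m` distinct variables, so there are `O(n^m)`
of them and `E[S^(2m)] = O(n^m)`. From below, Jensen gives
`E[(S + r)^(2m)] ≥ E[(S + r)^2]^m ≥ Var(S)^m = (n Var ξ)^m`, and `Var ξ > 0` because `ξ` has a
density. Eventually `r^2 ≤ k`, so `2k ≤ n ≤ 3k` and `r^(2m) ≤ k^m`; the factor `λ^(-2m)` comes
out of the integral.
-/

open MeasureTheory ProbabilityTheory Filter Finset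
open scoped Nat ENNReal

section PiAntidiagCounting

variable {ι : Type*} [DecidableEq ι]

lemma le_of_mem_piAntidiag {s : Finset ι} {n : ℕ} {f : ι → ℕ} (hf : f ∈ s.piAntidiag n) (i : ι) :
    f i ≤ n := by
  rw [mem_piAntidiag] at hf
  by_cases hi : i ∈ s
  · exact hf.1 ▸ single_le_sum (fun _ _ ↦ Nat.zero_le _) hi
  · simp [not_imp_comm.1 (hf.2 i) hi]

lemma card_piAntidiag_le (s : Finset ι) (n : ℕ) : #(s.piAntidiag n) ≤ (n + 1) ^ #s := by
  classical
  calc #(s.piAntidiag n)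
      ≤ #((s.pi fun _ ↦ range (n + 1)).image fun g i ↦ if h : i ∈ s then g i h else 0) := by
        refine card_le_card fun f hf ↦ mem_image.2 ⟨fun i _ ↦ f i, ?_, funext fun i ↦ ?_⟩
        · exact mem_pi.2 fun i _ ↦ mem_range_succ_iff.2 (le_of_mem_piAntidiag hf i)
        · rw [mem_piAntidiag] at hf
          split_ifs with hi
          · rfl
          · exact (not_imp_comm.1 (hf.2 i) hi).symm
    _ ≤ #(s.pi fun _ ↦ range (n + 1)) := card_image_le
    _ = (n + 1) ^ #s := by simp [card_pi]

lemma card_filter_powerset_card_le (s : Finset ι) (m : ℕ) (hs : s.Nonempty) :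
    #{T ∈ s.powerset | #T ≤ m} ≤ (m + 1) * #s ^ m := by
  have hsplit : {T ∈ s.powerset | #T ≤ m} = (range (m + 1)).biUnion (s.powersetCard ·) := by
    ext T
    simp [mem_powersetCard, and_comm]
  calc #{T ∈ s.powerset | #T ≤ m}
      ≤ ∑ j ∈ range (m + 1), #(s.powersetCard j) := hsplit ▸ card_biUnion_le
    _ ≤ ∑ _j ∈ range (m + 1), #s ^ m := by
        refine sum_le_sum fun j hj ↦ ?_
        rw [card_powersetCard]
        exact (Nat.choose_le_pow _ _).trans
          (Nat.pow_le_pow_right hs.card_pos (Nat.lt_succ_iff.1 (mem_range.1 hj)))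
    _ = (m + 1) * #s ^ m := by simp

lemma card_filter_piAntidiag_card_support_le (s : Finset ι) (n m : ℕ) (hs : s.Nonempty) :
    #{f ∈ s.piAntidiag n | #{i ∈ s | f i ≠ 0} ≤ m} ≤ (m + 1) * (n + 1) ^ m * #s ^ m := by
  classical
  have hcover : {f ∈ s.piAntidiag n | #{i ∈ s | f i ≠ 0} ≤ m} ⊆
      {T ∈ s.powerset | #T ≤ m}.biUnion (·.piAntidiag n) := by
    intro f hf
    obtain ⟨hf, hsupp⟩ := mem_filter.1 hf
    refine mem_biUnion.2
      ⟨{i ∈ s | f i ≠ 0}, mem_filter.2 ⟨mem_powerset.2 (filter_subset _ _), hsupp⟩, ?_⟩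
    rw [mem_piAntidiag] at hf ⊢
    exact ⟨by rw [sum_filter_ne_zero, hf.1], fun i hi ↦ mem_filter.2 ⟨hf.2 i hi, hi⟩⟩
  calc #{f ∈ s.piAntidiag n | #{i ∈ s | f i ≠ 0} ≤ m}
      ≤ ∑ T ∈ {T ∈ s.powerset | #T ≤ m}, #(T.piAntidiag n) :=
        (card_le_card hcover).trans card_biUnion_le
    _ ≤ ∑ _T ∈ {T ∈ s.powerset | #T ≤ m}, (n + 1) ^ m := by
        refine sum_le_sum fun T hT ↦ (card_piAntidiag_le T n).trans ?_
        exact Nat.pow_le_pow_right n.succ_pos (mem_filter.1 hT).2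
    _ ≤ (m + 1) * (n + 1) ^ m * #s ^ m := by
        rw [sum_const, smul_eq_mul, mul_right_comm]
        exact Nat.mul_le_mul_right _ (card_filter_powerset_card_le s m hs)

lemma card_support_le_of_ne_one {s : Finset ι} {m : ℕ} {f : ι → ℕ}
    (hf : f ∈ s.piAntidiag (2 * m)) (hone : ∀ i ∈ s, f i ≠ 1) : #{i ∈ s | f i ≠ 0} ≤ m := by
  have hge2 : ∀ i ∈ {i ∈ s | f i ≠ 0}, 2 ≤ f i := fun i hi ↦ by
    obtain ⟨his, hne⟩ := mem_filter.1 hi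
    have := hone i his
    omega
  have : 2 * #{i ∈ s | f i ≠ 0} ≤ 2 * m :=
    calc 2 * #{i ∈ s | f i ≠ 0} = ∑ _i ∈ s with f _i ≠ 0, 2 := by simp [mul_comm]
      _ ≤ ∑ i ∈ s with f i ≠ 0, f i := sum_le_sum hge2
      _ = 2 * m := by rw [sum_filter_ne_zero, (mem_piAntidiag.1 hf).1]
  omega

end PiAntidiagCounting

section IndependentProducts

variable {Ω ι : Type*} {mΩ : MeasurableSpace Ω} {μ : Measure Ω}

lemma memLp_of_integrable_pow_of_even {X : Ω → ℝ} {n : ℕ} (hn : Even n)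
    (hX : AEStronglyMeasurable X μ) (hint : Integrable (fun ω ↦ X ω ^ n) μ) : MemLp X n μ := by
  rcases eq_or_ne n 0 with rfl | hn0
  · simpa using memLp_zero_iff_aestronglyMeasurable.2 hX
  refine (integrable_norm_rpow_iff hX (by exact_mod_cast hn0) (by simp)).1 ?_
  simpa [Real.norm_eq_abs, hn.pow_abs] using hint

lemma ProbabilityTheory.iIndepFun.integral_finset_prod {X : ι → Ω → ℝ} (hX : iIndepFun X μ)
    (hmeas : ∀ i, AEStronglyMeasurable (X i) μ) (s : Finset ι) :
    ∫ ω, ∏ i ∈ s, X i ω ∂μ = ∏ i ∈ s, ∫ ω, X i ω ∂μ := by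
  have := (hX.precomp (g := ((↑) : s → ι)) Subtype.val_injective).integral_fun_prod_eq_prod_integral
    fun i ↦ hmeas i
  convert this using 1
  · exact integral_congr_ae (ae_of_all _ fun ω ↦ (Finset.prod_coe_sort s (X · ω)).symm)
  · exact (Finset.prod_coe_sort s _).symm

variable [IsProbabilityMeasure μ]

lemma MeasureTheory.MemLp.integrable_pow_of_le {X : Ω → ℝ} {n p : ℕ} (hX : MemLp X n μ)
    (hp : p ≤ n) : Integrable (fun ω ↦ X ω ^ p) μ := by
  have hXp : MemLp X p μ := hX.mono_exponent (by exact_mod_cast hp)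
  exact hXp.integrable_norm_pow'.mono' (hXp.1.pow p) (ae_of_all _ fun ω ↦ by simp)

lemma ProbabilityTheory.iIndepFun.integrable_finset_prod {X : ι → Ω → ℝ} (hX : iIndepFun X μ)
    (hint : ∀ i, Integrable (X i) μ) (s : Finset ι) :
    Integrable (fun ω ↦ ∏ i ∈ s, X i ω) μ := by
  induction s using Finset.cons_induction with
  | empty => simp
  | cons i s hi ih =>
    have hind := hX.indepFun_finsetProd_of_notMem₀ (fun j ↦ (hint j).aemeasurable) hi
    have := hind.integrable_mul (by simpa [Finset.prod_fn] using ih) (hint i)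
    simpa [Finset.prod_cons, Finset.prod_fn, Pi.mul_def, mul_comm] using this

lemma integral_sum_pow_eq_sum_piAntidiag [DecidableEq ι] {W : ι → Ω → ℝ} {n : ℕ}
    (hW : iIndepFun W μ) (hLp : ∀ i, MemLp (W i) n μ) (s : Finset ι) :
    ∫ ω, (∑ i ∈ s, W i ω) ^ n ∂μ =
      ∑ f ∈ s.piAntidiag n, (Nat.multinomial s f : ℝ) * ∏ i ∈ s, ∫ ω, W i ω ^ f i ∂μ := by
  have hpow (f : ι → ℕ) : iIndepFun (fun i ω ↦ W i ω ^ f i) μ :=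
    hW.comp (fun i x ↦ x ^ f i) fun i ↦ measurable_id.pow_const _
  have hint {f} (hf : f ∈ s.piAntidiag n) (i : ι) : Integrable (fun ω ↦ W i ω ^ f i) μ :=
    (hLp i).integrable_pow_of_le (le_of_mem_piAntidiag hf i)
  simp_rw [sum_pow_eq_sum_piAntidiag]
  rw [integral_finsetSum _ fun f hf ↦ ((hpow f).integrable_finset_prod (hint hf) s).const_mul _]
  refine sum_congr rfl fun f hf ↦ ?_
  rw [integral_const_mul, (hpow f).integral_finset_prod (fun i ↦ (hint hf i).1) s]

end IndependentProducts

section EvenMomentsOfSums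

variable {Ω ι : Type*} {mΩ : MeasurableSpace Ω} {μ : Measure Ω} [IsProbabilityMeasure μ]

lemma Nat.multinomial_le_factorial_sum (s : Finset ι) (f : ι → ℕ) :
    Nat.multinomial s f ≤ (∑ i ∈ s, f i)! :=
  Nat.le_of_dvd (Nat.factorial_pos _) (Dvd.intro_left _ (Nat.multinomial_spec s f))

lemma abs_pow_le_one_add_pow {n p : ℕ} (hn : Even n) (hp : p ≤ n) (x : ℝ) :
    |x| ^ p ≤ 1 + x ^ n := by
  rcases le_total |x| 1 with hx | hx
  · linarith [pow_le_one₀ (abs_nonneg x) hx (n := p), hn.pow_nonneg x]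
  · linarith [pow_le_pow_right₀ hx hp, hn.pow_abs x]

lemma abs_integral_pow_le_pow {X : Ω → ℝ} {n p : ℕ} {M : ℝ} (hn : Even n) (hX : MemLp X n μ)
    (hM : ∫ ω, X ω ^ n ∂μ ≤ M) (hp : p ≤ n) : |∫ ω, X ω ^ p ∂μ| ≤ (1 + M) ^ p := by
  rcases eq_or_ne p 0 with rfl | hp0
  · simp
  have hM0 : 0 ≤ M := (integral_nonneg fun ω ↦ hn.pow_nonneg (X ω)).trans hM
  calc |∫ ω, X ω ^ p ∂μ| ≤ ∫ ω, |X ω| ^ p ∂μ := by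
        simpa only [abs_pow] using abs_integral_le_integral_abs (f := fun ω ↦ X ω ^ p)
    _ ≤ ∫ ω, (1 + X ω ^ n) ∂μ :=
        integral_mono (by simpa only [abs_pow] using (hX.integrable_pow_of_le hp).abs)
          ((integrable_const 1).add (hX.integrable_pow_of_le le_rfl))
          fun ω ↦ abs_pow_le_one_add_pow hn hp (X ω)
    _ ≤ 1 + M := by
        rw [integral_add (integrable_const 1) (hX.integrable_pow_of_le le_rfl)]
        simpa using hM
    _ ≤ (1 + M) ^ p := le_self_pow₀ (by linarith) hp0

-- `(2m)!` bounds the multinomial coefficients, `(1 + M) ^ (2m)` the products of moments, and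
-- `(m + 1) (2m + 1) ^ m n ^ m` the number of terms in which no variable occurs exactly once.
def sumMomentConst (m : ℕ) (M : ℝ) : ℝ := (2 * m)! * (1 + M) ^ (2 * m) * ((m + 1) * (2 * m + 1) ^ m)

lemma sumMomentConst_nonneg (m : ℕ) (M : ℝ) : 0 ≤ sumMomentConst m M := by
  have := (even_two_mul m).pow_nonneg (1 + M)
  unfold sumMomentConst
  positivity

lemma integral_sum_pow_le_card_pow [DecidableEq ι] {W : ι → Ω → ℝ} {m : ℕ} {M : ℝ}
    (hW : iIndepFun W μ) (hLp : ∀ i, MemLp (W i) (2 * m : ℕ) μ)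
    (hmean : ∀ i, ∫ ω, W i ω ∂μ = 0) (hM : ∀ i, ∫ ω, W i ω ^ (2 * m) ∂μ ≤ M)
    {s : Finset ι} (hs : s.Nonempty) :
    ∫ ω, (∑ i ∈ s, W i ω) ^ (2 * m) ∂μ ≤ sumMomentConst m M * (#s : ℝ) ^ m := by
  set term : (ι → ℕ) → ℝ := fun f ↦
    (Nat.multinomial s f : ℝ) * ∏ i ∈ s, ∫ ω, W i ω ^ f i ∂μ
  have hvanish : ∀ f ∈ s.piAntidiag (2 * m), term f ≠ 0 → ∀ i ∈ s, f i ≠ 1 := by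
    intro f _ hf i hi hfi
    have : ∫ ω, W i ω ^ f i ∂μ = 0 := by simp [hfi, hmean]
    exact hf (mul_eq_zero_of_right _ (prod_eq_zero hi this))
  have hterm : ∀ f ∈ s.piAntidiag (2 * m), term f ≤ (2 * m)! * (1 + M) ^ (2 * m) := by
    intro f hf
    have hsum := (mem_piAntidiag.1 hf).1
    have hprod : |∏ i ∈ s, ∫ ω, W i ω ^ f i ∂μ| ≤ (1 + M) ^ (2 * m) := by
      rw [abs_prod, ← hsum, ← prod_pow_eq_pow_sum]
      exact Finset.prod_le_prod (fun _ _ ↦ abs_nonneg _) fun i _ ↦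
        abs_integral_pow_le_pow (even_two_mul m) (hLp i) (hM i) (le_of_mem_piAntidiag hf i)
    have hmult : (Nat.multinomial s f : ℝ) ≤ (2 * m)! := by
      exact_mod_cast hsum ▸ Nat.multinomial_le_factorial_sum s f
    exact (mul_le_mul_of_nonneg_left (le_abs_self _) (Nat.cast_nonneg _)).trans
      (mul_le_mul hmult hprod (abs_nonneg _) (Nat.cast_nonneg _))
  have hcard : #{f ∈ s.piAntidiag (2 * m) | ∀ i ∈ s, f i ≠ 1} ≤
      (m + 1) * (2 * m + 1) ^ m * #s ^ m :=
    (card_le_card (monotone_filter_right _ fun f hf hone ↦ card_support_le_of_ne_one hf hone)).trans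
      (card_filter_piAntidiag_card_support_le s (2 * m) m hs)
  rw [integral_sum_pow_eq_sum_piAntidiag hW hLp, ← sum_filter_of_ne hvanish]
  calc ∑ f ∈ s.piAntidiag (2 * m) with ∀ i ∈ s, f i ≠ 1, term f
      ≤ #{f ∈ s.piAntidiag (2 * m) | ∀ i ∈ s, f i ≠ 1} • ((2 * m)! * (1 + M) ^ (2 * m)) :=
        sum_le_card_nsmul _ _ _ fun f hf ↦ hterm f (mem_filter.1 hf).1
    _ ≤ (2 * m)! * (1 + M) ^ (2 * m) * ((m + 1) * (2 * m + 1) ^ m * (#s : ℝ) ^ m) := by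
        have := (even_two_mul m).pow_nonneg (1 + M)
        rw [nsmul_eq_mul, mul_comm]
        exact mul_le_mul_of_nonneg_left (by exact_mod_cast hcard) (by positivity)
    _ = sumMomentConst m M * (#s : ℝ) ^ m := by
        rw [sumMomentConst]
        ring

end EvenMomentsOfSums

section ShiftedSums

variable {Ω ι : Type*} {mΩ : MeasurableSpace Ω} {μ : Measure Ω} [IsProbabilityMeasure μ]
  {W : ι → Ω → ℝ} {m : ℕ} {M : ℝ} {s : Finset ι}

lemma pow_integral_sq_le_integral_pow {X : Ω → ℝ} (hm : m ≠ 0)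
    (hX : MemLp X (2 * m : ℕ) μ) : (∫ ω, X ω ^ 2 ∂μ) ^ m ≤ ∫ ω, X ω ^ (2 * m) ∂μ := by
  have hsq := hX.integrable_pow_of_le (p := 2) (by omega)
  simpa only [Function.comp_def, ← pow_mul] using
    (convexOn_pow m).map_integral_le (continuous_pow m).continuousOn isClosed_Ici
      (ae_of_all _ fun ω ↦ sq_nonneg (X ω)) hsq
      (by simpa only [Function.comp_def, ← pow_mul] using hX.integrable_pow_of_le le_rfl)

lemma pow_sum_variance_le_integral_sum_add_pow (hm : m ≠ 0)
    (hW : iIndepFun W μ) (hLp : ∀ i, MemLp (W i) (2 * m : ℕ) μ) (s : Finset ι) (c : ℝ) :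
    (∑ i ∈ s, Var[W i; μ]) ^ m ≤ ∫ ω, (∑ i ∈ s, W i ω + c) ^ (2 * m) ∂μ := by
  have hLp2 (i : ι) : MemLp (W i) 2 μ := (hLp i).mono_exponent (by norm_cast; omega)
  have hS : MemLp (fun ω ↦ ∑ i ∈ s, W i ω + c) (2 * m : ℕ) μ :=
    (memLp_finsetSum s fun i _ ↦ hLp i).add (memLp_const c)
  have hvar : Var[fun ω ↦ ∑ i ∈ s, W i ω + c; μ] = ∑ i ∈ s, Var[W i; μ] := by
    rw [variance_add_const (memLp_finsetSum s fun i _ ↦ hLp i).1, ← IndepFun.variance_sum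
      (fun i _ ↦ hLp2 i) fun i _ j _ hij ↦ hW.indepFun hij]
    simp [Finset.sum_fn]
  calc (∑ i ∈ s, Var[W i; μ]) ^ m
      ≤ (∫ ω, (∑ i ∈ s, W i ω + c) ^ 2 ∂μ) ^ m := by
        rw [← hvar]
        exact pow_le_pow_left₀ (variance_nonneg _ _) (variance_le_expectation_sq hS.1) m
    _ ≤ ∫ ω, (∑ i ∈ s, W i ω + c) ^ (2 * m) ∂μ := pow_integral_sq_le_integral_pow hm hS

lemma integral_sum_add_pow_le_card_pow [DecidableEq ι] (hW : iIndepFun W μ)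
    (hLp : ∀ i, MemLp (W i) (2 * m : ℕ) μ) (hmean : ∀ i, ∫ ω, W i ω ∂μ = 0)
    (hM : ∀ i, ∫ ω, W i ω ^ (2 * m) ∂μ ≤ M) (hs : s.Nonempty) (c : ℝ) :
    ∫ ω, (∑ i ∈ s, W i ω + c) ^ (2 * m) ∂μ ≤ 2 ^ (2 * m - 1) *
      (sumMomentConst m M * (#s : ℝ) ^ m + c ^ (2 * m)) := by
  have hS : MemLp (fun ω ↦ ∑ i ∈ s, W i ω) (2 * m : ℕ) μ := memLp_finsetSum s fun i _ ↦ hLp i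
  calc ∫ ω, (∑ i ∈ s, W i ω + c) ^ (2 * m) ∂μ
      ≤ ∫ ω, 2 ^ (2 * m - 1) * ((∑ i ∈ s, W i ω) ^ (2 * m) + c ^ (2 * m)) ∂μ :=
        integral_mono ((hS.add (memLp_const c)).integrable_pow_of_le le_rfl)
          (((hS.integrable_pow_of_le le_rfl).add (integrable_const _)).const_mul _)
          fun ω ↦ (even_two_mul m).add_pow_le
    _ = 2 ^ (2 * m - 1) * (∫ ω, (∑ i ∈ s, W i ω) ^ (2 * m) ∂μ + c ^ (2 * m)) := by
        rw [integral_const_mul, integral_add (hS.integrable_pow_of_le le_rfl) (integrable_const _)]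
        simp
    _ ≤ _ := by gcongr; exact integral_sum_pow_le_card_pow hW hLp hmean hM hs

lemma pow_mul_pow_le_integral_sum_add_pow {v : ℝ} (hm : m ≠ 0) (hW : iIndepFun W μ)
    (hLp : ∀ i, MemLp (W i) (2 * m : ℕ) μ) (hv : 0 ≤ v) (hvar : ∀ i ∈ s, v ≤ Var[W i; μ])
    {k : ℕ} (hs : 2 * k ≤ #s) (c : ℝ) :
    (2 * v) ^ m * (k : ℝ) ^ m ≤ ∫ ω, (∑ i ∈ s, W i ω + c) ^ (2 * m) ∂μ := by
  calc (2 * v) ^ m * (k : ℝ) ^ m = ((2 * k : ℕ) * v) ^ m := by push_cast; ring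
    _ ≤ (#s * v) ^ m := by gcongr
    _ ≤ (∑ i ∈ s, Var[W i; μ]) ^ m := by
        gcongr
        simpa using card_nsmul_le_sum s _ v hvar
    _ ≤ ∫ ω, (∑ i ∈ s, W i ω + c) ^ (2 * m) ∂μ :=
        pow_sum_variance_le_integral_sum_add_pow hm hW hLp s c

lemma integral_sum_add_pow_le_mul_pow [DecidableEq ι] (hW : iIndepFun W μ)
    (hLp : ∀ i, MemLp (W i) (2 * m : ℕ) μ) (hmean : ∀ i, ∫ ω, W i ω ∂μ = 0)
    (hM : ∀ i, ∫ ω, W i ω ^ (2 * m) ∂μ ≤ M) (hs₀ : s.Nonempty) {k c : ℕ} (hs : #s ≤ 3 * k)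
    (hc : c ^ 2 ≤ k) :
    ∫ ω, (∑ i ∈ s, W i ω + c) ^ (2 * m) ∂μ ≤
      2 ^ (2 * m - 1) * (sumMomentConst m M * 3 ^ m + 1) * (k : ℝ) ^ m := by
  have := sumMomentConst_nonneg m M
  calc ∫ ω, (∑ i ∈ s, W i ω + c) ^ (2 * m) ∂μ
      ≤ 2 ^ (2 * m - 1) * (sumMomentConst m M * (#s : ℝ) ^ m + ((c : ℝ) ^ 2) ^ m) := by
        rw [← pow_mul]
        exact integral_sum_add_pow_le_card_pow hW hLp hmean hM hs₀ c
    _ ≤ 2 ^ (2 * m - 1) * (sumMomentConst m M * ((3 * k : ℕ) : ℝ) ^ m + (k : ℝ) ^ m) := by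
        gcongr
        exact_mod_cast hc
    _ = _ := by push_cast; ring

lemma variance_pos_of_absolutelyContinuous {X : Ω → ℝ} (hX : MemLp X 2 μ)
    (hac : μ.map X ≪ volume) : 0 < Var[X; μ] := by
  refine (variance_nonneg X μ).lt_of_ne' fun h0 ↦ ?_
  have hdirac : μ.map X = Measure.dirac μ[X] := by
    rw [Measure.map_congr (ae_eq_integral_of_variance_eq_zero hX h0), Measure.map_const,
      measure_univ, one_smul]
  simpa [hdirac] using hac (Real.volume_singleton (a := μ[X]))

end ShiftedSums

section TwoSamples

variable {Ω α β : Type*} {mΩ : MeasurableSpace Ω} {μ : Measure Ω}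

def sumSign : α ⊕ β → ℝ := Sum.elim (fun _ ↦ 1) (fun _ ↦ -1)

lemma sumSign_sq (j : α ⊕ β) : sumSign j ^ 2 = 1 := by
  cases j <;> simp [sumSign]

def signedCentered (Z : α ⊕ β → Ω → ℝ) (j : α ⊕ β) (ω : Ω) : ℝ := sumSign j * (Z j ω - 1)

lemma sum_range_sub_sum_range_eq (ξ τ : ℕ → Ω → ℝ) (k r : ℕ) (ω : Ω) :
    ∑ i ∈ range (k + r), ξ i ω - ∑ i ∈ range k, τ i ω =
      ∑ j ∈ (range (k + r)).disjSum (range k), signedCentered (Sum.elim ξ τ) j ω + r := by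
  simp only [signedCentered, sumSign, sum_disjSum, Sum.elim_inl, Sum.elim_inr, one_mul,
    neg_one_mul, sum_sub_distrib, sum_neg_distrib, sum_const, card_range, nsmul_eq_mul, mul_one,
    Nat.cast_add]
  ring

lemma ProbabilityTheory.iIndepFun.signedCentered {Z : α ⊕ β → Ω → ℝ} (hZ : iIndepFun Z μ) :
    iIndepFun (signedCentered Z) μ :=
  hZ.comp (fun j x ↦ sumSign j * (x - 1)) fun j ↦ by fun_prop

variable {Z : α ⊕ β → Ω → ℝ} {X : Ω → ℝ} {j : α ⊕ β}

lemma identDistrib_signedCentered (hZ : IdentDistrib (Z j) X μ μ) :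
    IdentDistrib (signedCentered Z j) (fun ω ↦ sumSign j * (X ω - 1)) μ μ :=
  hZ.comp (u := fun x ↦ sumSign j * (x - 1)) (by fun_prop)

variable [IsProbabilityMeasure μ]

lemma memLp_signedCentered {p : ℝ≥0∞} (hZ : IdentDistrib (Z j) X μ μ) (hX : MemLp X p μ) :
    MemLp (signedCentered Z j) p μ :=
  (identDistrib_signedCentered hZ).memLp_iff.2 ((hX.sub (memLp_const 1)).const_mul _)

lemma integral_signedCentered (hZ : IdentDistrib (Z j) X μ μ) (hX : Integrable X μ)
    (hmean : ∫ ω, X ω ∂μ = 1) : ∫ ω, signedCentered Z j ω ∂μ = 0 := by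
  rw [(identDistrib_signedCentered hZ).integral_eq, integral_const_mul,
    integral_sub hX (integrable_const 1), hmean]
  simp

lemma integral_signedCentered_pow_le {m : ℕ} (hZ : IdentDistrib (Z j) X μ μ)
    (hX : MemLp X (2 * m : ℕ) μ) :
    ∫ ω, signedCentered Z j ω ^ (2 * m) ∂μ ≤ 2 ^ (2 * m - 1) * (∫ ω, X ω ^ (2 * m) ∂μ + 1) := by
  have hdist := ((identDistrib_signedCentered hZ).comp
    (u := fun x : ℝ ↦ x ^ (2 * m)) (by fun_prop)).integral_eq
  have hsign (y : ℝ) : (sumSign j * y) ^ (2 * m) = y ^ (2 * m) := by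
    rw [mul_pow, pow_mul, sumSign_sq, one_pow, one_mul]
  calc ∫ ω, signedCentered Z j ω ^ (2 * m) ∂μ = ∫ ω, (X ω + -1) ^ (2 * m) ∂μ := by
        simpa only [Function.comp_def, hsign, sub_eq_add_neg] using hdist
    _ ≤ ∫ ω, 2 ^ (2 * m - 1) * (X ω ^ (2 * m) + 1) ∂μ :=
        integral_mono ((hX.add (memLp_const _)).integrable_pow_of_le le_rfl)
          (((hX.integrable_pow_of_le le_rfl).add (integrable_const _)).const_mul _)
          fun ω ↦ by
            simpa [(even_two_mul m).neg_pow] using (even_two_mul m).add_pow_le (a := X ω) (b := -1)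
    _ = 2 ^ (2 * m - 1) * (∫ ω, X ω ^ (2 * m) ∂μ + 1) := by
        rw [integral_const_mul, integral_add (hX.integrable_pow_of_le le_rfl) (integrable_const _)]
        simp

lemma variance_signedCentered (hZ : IdentDistrib (Z j) X μ μ) (hX : AEStronglyMeasurable X μ) :
    Var[signedCentered Z j; μ] = Var[X; μ] := by
  rw [(identDistrib_signedCentered hZ).variance_eq, variance_const_mul, variance_sub_const hX,
    sumSign_sq, one_mul]

end TwoSamples

lemma eventually_sq_le_of_isLittleO_sqrt {r : ℕ → ℕ}
    (hr : (fun k : ℕ ↦ (r k : ℝ)) =o[atTop] fun k : ℕ ↦ (k : ℝ) ^ ((1 : ℝ) / 2)) :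
    ∀ᶠ k in atTop, r k ^ 2 ≤ k := by
  filter_upwards [hr.bound one_pos] with k hk
  rw [Real.norm_natCast, one_mul, Real.norm_of_nonneg (by positivity)] at hk
  have : (r k : ℝ) ^ 2 ≤ k := by
    calc (r k : ℝ) ^ 2 ≤ ((k : ℝ) ^ ((1 : ℝ) / 2)) ^ 2 := pow_le_pow_left₀ (by positivity) hk 2
      _ = k := by rw [← Real.rpow_natCast, ← Real.rpow_mul (by positivity)]; norm_num
  exact_mod_cast this

lemma abs_one_div_mul_sub_pow {n : ℕ} (hn : Even n) (lam x y : ℝ) :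
    |1 / lam * x - 1 / lam * y| ^ n = (x - y) ^ n / lam ^ n := by
  rw [hn.pow_abs, ← mul_sub, mul_pow, one_div_pow, one_div_mul_eq_div]

theorem expected_abs_diff_pow_shift_theta_general
    {Ω : Type*} [MeasureSpace Ω] [IsProbabilityMeasure (ℙ : Measure Ω)]
    (a : ℕ) (ha0 : 0 < a) (hae : Even a)
    (ξ τ : ℕ → Ω → ℝ)
    (hindep : iIndepFun (Sum.elim ξ τ) ℙ)
    (hidξ : ∀ i j : ℕ, IdentDistrib (ξ i) (ξ j) ℙ ℙ)
    (hidξτ : ∀ i : ℕ, IdentDistrib (ξ i) (τ i) ℙ ℙ)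
    (habs : ∀ i, (ℙ : Measure Ω).map (ξ i) ≪ (volume : Measure ℝ))
    (hmean : ∀ i, ∫ ω, ξ i ω ∂ℙ = 1)
    (hint : ∀ i, ∀ p : ℕ, p ≤ a → Integrable (fun ω => ξ i ω ^ p) ℙ)
    (r : ℕ → ℕ)
    (hr : (fun k : ℕ => (r k : ℝ)) =o[atTop] (fun k : ℕ => (k : ℝ) ^ ((1 : ℝ) / 2))) :
    ∃ c₁ c₂ : ℝ, ∃ K : ℕ, 0 < c₁ ∧ 0 < c₂ ∧
      ∀ lam : ℝ, 0 < lam → ∀ k : ℕ, K ≤ k →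
        c₁ * (k : ℝ) ^ (a / 2) / lam ^ a
          ≤ (∫ ω, |(1 / lam) * (∑ i ∈ Finset.range (k + r k), ξ i ω)
                  - (1 / lam) * (∑ i ∈ Finset.range k, τ i ω)| ^ a ∂ℙ) ∧
        (∫ ω, |(1 / lam) * (∑ i ∈ Finset.range (k + r k), ξ i ω)
                - (1 / lam) * (∑ i ∈ Finset.range k, τ i ω)| ^ a ∂ℙ)
          ≤ c₂ * (k : ℝ) ^ (a / 2) / lam ^ a := by
  obtain ⟨m, rfl⟩ := hae.two_dvd
  have hm : m ≠ 0 := by omega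
  have hξ : MemLp (ξ 0) (2 * m : ℕ) ℙ := memLp_of_integrable_pow_of_even (even_two_mul m)
    (by simpa using (hint 0 1 (by omega)).1) (hint 0 _ le_rfl)
  have hZ : ∀ j, IdentDistrib (Sum.elim ξ τ j) (ξ 0) ℙ ℙ := by
    rintro (i | i)
    exacts [hidξ i 0, (hidξτ i).symm.trans (hidξ i 0)]
  have hξ2 : MemLp (ξ 0) 2 ℙ := hξ.mono_exponent (by exact_mod_cast (by omega : 2 ≤ 2 * m))
  have hv := variance_pos_of_absolutelyContinuous hξ2 (habs 0)
  obtain ⟨K, hK⟩ := eventually_atTop.1 (eventually_sq_le_of_isLittleO_sqrt hr)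
  set M : ℝ := 2 ^ (2 * m - 1) * (∫ ω, ξ 0 ω ^ (2 * m) ∂ℙ + 1)
  have hB := sumMomentConst_nonneg m M
  refine ⟨(2 * Var[ξ 0; ℙ]) ^ m, 2 ^ (2 * m - 1) * (sumMomentConst m M * 3 ^ m + 1), max K 1,
    pow_pos (by positivity) m, by positivity, fun lam hlam k hk ↦ ?_⟩
  have hcard : #((range (k + r k)).disjSum (range k)) = 2 * k + r k := by
    rw [card_disjSum, card_range, card_range]
    ring
  have hrk : r k ^ 2 ≤ k := hK k (le_of_max_le_left hk)
  have hr_le : r k ≤ r k ^ 2 := Nat.le_self_pow two_ne_zero (r k)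
  simp_rw [abs_one_div_mul_sub_pow (even_two_mul m), sum_range_sub_sum_range_eq, integral_div,
    Nat.mul_div_cancel_left m two_pos]
  refine ⟨div_le_div_of_nonneg_right ?_ (by positivity),
    div_le_div_of_nonneg_right ?_ (by positivity)⟩
  · exact pow_mul_pow_le_integral_sum_add_pow hm hindep.signedCentered
      (fun j ↦ memLp_signedCentered (hZ j) hξ) hv.le
      (fun j _ ↦ (variance_signedCentered (hZ j) hξ.1).ge) (by omega) _
  · exact integral_sum_add_pow_le_mul_pow hindep.signedCentered
      (fun j ↦ memLp_signedCentered (hZ j) hξ)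
      (fun j ↦ integral_signedCentered (hZ j) (hξ2.integrable one_le_two) (hmean 0))
      (fun j ↦ integral_signedCentered_pow_le (hZ j) hξ)
      ⟨.inr 0, inr_mem_disjSum.2 (mem_range.2 (by omega))⟩ (by omega) hrk

/-- For an even positive integer `a`, two identical independent general random processes
`X_k = (1/λ) Σ_{i=1}^k ξ_i`, `Y_k = (1/λ) Σ_{i=1}^k τ_i`, and `r(k) = o(k^(1/2))`,
one has `E[|X_{k+r(k)} − Y_k|^a] = Θ(k^(a/2))/λ^a`, with constants independent of `λ`. -/
theorem expected_abs_diff_pow_shift_theta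
    {Ω : Type*} [MeasureSpace Ω] [IsProbabilityMeasure (ℙ : Measure Ω)]
    (a : ℕ) (ha0 : 0 < a) (hae : Even a)
    (ξ τ : ℕ → Ω → ℝ)
    (hmeasξ : ∀ i, Measurable (ξ i)) (hmeasτ : ∀ i, Measurable (τ i))
    (hindep : iIndepFun (Sum.elim ξ τ) ℙ)
    (hidξ : ∀ i j : ℕ, IdentDistrib (ξ i) (ξ j) ℙ ℙ)
    (hidξτ : ∀ i : ℕ, IdentDistrib (ξ i) (τ i) ℙ ℙ)
    (hpos : ∀ i ω, 0 < ξ i ω)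
    (habs : ∀ i, (ℙ : Measure Ω).map (ξ i) ≪ (volume : Measure ℝ))
    (hmean : ∀ i, ∫ ω, ξ i ω ∂ℙ = 1)
    (C : ℝ)
    (hint : ∀ i, ∀ p : ℕ, p ≤ a → Integrable (fun ω => ξ i ω ^ p) ℙ)
    (hmom : ∀ i, ∀ p : ℕ, 2 ≤ p → p ≤ a → ∫ ω, ξ i ω ^ p ∂ℙ ≤ C)
    (r : ℕ → ℕ)
    (hr : (fun k : ℕ => (r k : ℝ)) =o[atTop] (fun k : ℕ => (k : ℝ) ^ ((1 : ℝ) / 2))) :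
    ∃ c₁ c₂ : ℝ, ∃ K : ℕ, 0 < c₁ ∧ 0 < c₂ ∧
      ∀ lam : ℝ, 0 < lam → ∀ k : ℕ, K ≤ k →
        c₁ * (k : ℝ) ^ (a / 2) / lam ^ a
          ≤ (∫ ω, |(1 / lam) * (∑ i ∈ Finset.range (k + r k), ξ i ω)
                  - (1 / lam) * (∑ i ∈ Finset.range k, τ i ω)| ^ a ∂ℙ) ∧
        (∫ ω, |(1 / lam) * (∑ i ∈ Finset.range (k + r k), ξ i ω)
                - (1 / lam) * (∑ i ∈ Finset.range k, τ i ω)| ^ a ∂ℙ)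
          ≤ c₂ * (k : ℝ) ^ (a / 2) / lam ^ a :=
  expected_abs_diff_pow_shift_theta_general a ha0 hae ξ τ hindep hidξ hidξτ habs hmean hint r hr
end

section
/- Let a be an even positive integer. There exists a constant D > 0 depending only on a such that for every integer k > a/2, the number of tuples (l_1, l_2, …, l_k) of natural numbers with l_1 + l_2 + ⋯ + l_k = a, every l_i even, and at least one l_i ∉ {0, 2}, is at most D · k^{a/2 − 1}. Moreover, the number of tuples (l_1, …, l_k) of natural numbers with l_1 + ⋯ + l_k = a and every l_i ∈ {0, 2} equals the binomial coefficient C(k, a/2). -/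
/-!
A tuple of even numbers summing to `2m` with some entry `≥ 4` has at most `m - 1` nonzero
entries, so it is determined by its graph, a set of fewer than `m` pairs in
`Fin k × {0, …, 2m}`; there are at most `m (k (2m + 1))^(m - 1)` such sets. Tuples with entries
in `{0, 2}` summing to `2m` are twice the indicator functions of the `m`-subsets of `Fin k`.
-/

open Finset

theorem card_powerset_filter_card_lt_le {α : Type*} [DecidableEq α] {U : Finset α}
    (hU : U.Nonempty) (n : ℕ) :
    #{s ∈ U.powerset | #s < n} ≤ n * #U ^ (n - 1) :=
  calc #{s ∈ U.powerset | #s < n}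
      ≤ #((range n).biUnion (U.powersetCard ·)) := card_le_card fun s hs => by
        simp only [mem_filter, mem_powerset] at hs
        simp only [mem_biUnion, mem_range, mem_powersetCard]
        exact ⟨#s, hs.2, hs.1, rfl⟩
    _ ≤ ∑ i ∈ range n, #(U.powersetCard i) := card_biUnion_le
    _ ≤ ∑ _i ∈ range n, #U ^ (n - 1) := sum_le_sum fun i hi => by
        rw [card_powersetCard, mem_range] at *
        exact (Nat.choose_le_pow _ _).trans (Nat.pow_le_pow_right hU.card_pos (by omega))
    _ = n * #U ^ (n - 1) := by rw [sum_const, card_range, smul_eq_mul]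

theorem two_mul_card_support_add_one_le_sum {ι : Type*} [Fintype ι] [DecidableEq ι] {l : ι → ℕ}
    (heven : ∀ i, Even (l i)) (hbig : ∃ i, l i ≠ 0 ∧ l i ≠ 2) :
    2 * (#{i | l i ≠ 0} + 1) ≤ ∑ i, l i := by
  obtain ⟨i₀, hi₀, hi₀'⟩ := hbig
  have hi₀4 : 4 ≤ l i₀ := by obtain ⟨t, ht⟩ := heven i₀; omega
  have hmem : i₀ ∈ ({i | l i ≠ 0} : Finset ι) := by simpa using hi₀
  have htwo_le : ∀ i ∈ ({i | l i ≠ 0} : Finset ι).erase i₀, 2 ≤ l i := fun i hi => by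
    have : l i ≠ 0 := by simpa using mem_of_mem_erase hi
    obtain ⟨t, ht⟩ := heven i; omega
  calc 2 * (#{i | l i ≠ 0} + 1) = 4 + ∑ _i ∈ ({i | l i ≠ 0} : Finset ι).erase i₀, 2 := by
        rw [sum_const, card_erase_of_mem hmem, smul_eq_mul]
        have := card_pos.mpr ⟨i₀, hmem⟩
        omega
    _ ≤ l i₀ + ∑ i ∈ ({i | l i ≠ 0} : Finset ι).erase i₀, l i := add_le_add hi₀4 (sum_le_sum htwo_le)
    _ = ∑ i, l i := by rw [add_sum_erase _ _ hmem, sum_filter_ne_zero]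

theorem card_tuples_zero_or_eq_eq_choose (k m c : ℕ) (hc : c ≠ 0) :
    #{l ∈ Nat.antidiagonalTuple k (c * m) | ∀ i, l i = 0 ∨ l i = c} = k.choose m :=
  calc _ = #(powersetCard m (univ : Finset (Fin k))) := by
        refine card_nbij' (fun l => ({i | l i = c} : Finset (Fin k)))
          (fun s i => if i ∈ s then c else 0) ?_ ?_ ?_ ?_
        · intro l hl
          simp only [mem_coe, mem_filter, Nat.mem_antidiagonalTuple] at hl
          have hsum : ∑ i, l i = #{i | l i = c} * c := by
            rw [card_filter, sum_mul]
            exact sum_congr rfl fun i _ => by rcases hl.2 i with h | h <;> simp [h, hc.symm]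
          simp only [mem_coe, mem_powersetCard, subset_univ, true_and]
          exact Nat.eq_of_mul_eq_mul_right (Nat.pos_of_ne_zero hc)
            (hsum.symm.trans (hl.1.trans (mul_comm c m)))
        · intro s hs
          simp only [mem_coe, mem_filter, Nat.mem_antidiagonalTuple, mem_powersetCard] at hs ⊢
          refine ⟨?_, fun i => ?_⟩
          · rw [sum_ite_mem, univ_inter, sum_const, hs.2, smul_eq_mul, mul_comm]
          · by_cases h : i ∈ s <;> simp [h]
        · intro l hl
          simp only [mem_coe, mem_filter] at hl
          funext i
          rcases hl.2 i with h | h <;> simp [h, hc.symm]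
        · intro s _
          ext i
          by_cases h : i ∈ s <;> simp [h, hc.symm]
    _ = k.choose m := by simp

theorem card_graph_equivFunOnFinite_symm {ι M : Type*} [Fintype ι] [Zero M]
    [DecidableEq M] (l : ι → M) :
    #(Finsupp.equivFunOnFinite.symm l).graph = #{i | l i ≠ 0} := by
  rw [Finsupp.graph, card_map]
  congr 1
  ext i
  simp

theorem card_even_tuples_with_large_entry_le (k m : ℕ) (hk : 0 < k) :
    #{l ∈ Nat.antidiagonalTuple k (2 * m) | (∀ i, Even (l i)) ∧ ∃ i, l i ≠ 0 ∧ l i ≠ 2}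
      ≤ m * (2 * m + 1) ^ (m - 1) * k ^ (m - 1) := by
  set U := (univ : Finset (Fin k)) ×ˢ range (2 * m + 1)
  have hU : U.Nonempty := univ_nonempty_iff.mpr ⟨⟨0, hk⟩⟩ |>.product nonempty_range_add_one
  calc _ ≤ #{s ∈ U.powerset | #s < m} := by
        refine card_le_card_of_injOn (fun l => (Finsupp.equivFunOnFinite.symm l).graph) ?_
          ((Finsupp.graph_injective _ _).comp Finsupp.equivFunOnFinite.symm.injective).injOn
        intro l hl
        simp only [mem_coe, mem_filter, Nat.mem_antidiagonalTuple, mem_powerset] at hl ⊢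
        obtain ⟨hsum, heven, hbig⟩ := hl
        refine ⟨fun c hc => ?_, ?_⟩
        · rw [Finsupp.mem_graph_iff, Finsupp.coe_equivFunOnFinite_symm] at hc
          have : l c.1 ≤ 2 * m := hsum ▸ single_le_sum (fun _ _ => Nat.zero_le _) (mem_univ _)
          simp only [U, mem_product, mem_univ, mem_range, true_and]
          omega
        · have := two_mul_card_support_add_one_le_sum heven hbig
          rw [card_graph_equivFunOnFinite_symm]
          omega
    _ ≤ m * #U ^ (m - 1) := card_powerset_filter_card_lt_le hU m
    _ = m * (2 * m + 1) ^ (m - 1) * k ^ (m - 1) := by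
        rw [card_product, card_univ, Fintype.card_fin, card_range, mul_pow]
        ring

theorem card_even_tuples_asymptotics_general
    (a : ℕ) (hae : Even a) :
    ∃ D : ℝ, 0 < D ∧ ∀ k : ℕ, a / 2 < k →
      (((Finset.Nat.antidiagonalTuple k a).filter
          (fun l : Fin k → ℕ => (∀ i, Even (l i)) ∧ ∃ i, l i ≠ 0 ∧ l i ≠ 2)).card : ℝ)
        ≤ D * (k : ℝ) ^ (a / 2 - 1) ∧
      ((Finset.Nat.antidiagonalTuple k a).filter
          (fun l : Fin k → ℕ => ∀ i, l i = 0 ∨ l i = 2)).card = k.choose (a / 2) := by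
  obtain ⟨m, rfl⟩ := hae
  rw [← two_mul, Nat.mul_div_cancel_left m two_pos]
  refine ⟨m * (2 * m + 1) ^ (m - 1) + 1, by positivity, fun k hk => ⟨?_, ?_⟩⟩
  · have hk0 : 0 < k := by omega
    calc _ ≤ ((m * (2 * m + 1) ^ (m - 1) * k ^ (m - 1) : ℕ) : ℝ) := by
          exact_mod_cast card_even_tuples_with_large_entry_le k m hk0
      _ ≤ _ := by push_cast; gcongr; linarith
  · exact card_tuples_zero_or_eq_eq_choose k m 2 two_ne_zero

/-- For an even positive integer `a` and `k > a/2`: the number of tuples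
`(l_1, …, l_k) ∈ ℕ^k` with sum `a`, all entries even, and some entry outside `{0, 2}`
is `O(k^(a/2 - 1))` (with a constant `D` depending only on `a`), and the number of such
tuples with every entry in `{0, 2}` is exactly `C(k, a/2)`. -/
theorem card_even_tuples_asymptotics
    (a : ℕ) (ha0 : 0 < a) (hae : Even a) :
    ∃ D : ℝ, 0 < D ∧ ∀ k : ℕ, a / 2 < k →
      (((Finset.Nat.antidiagonalTuple k a).filter
          (fun l : Fin k → ℕ => (∀ i, Even (l i)) ∧ ∃ i, l i ≠ 0 ∧ l i ≠ 2)).card : ℝ)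
        ≤ D * (k : ℝ) ^ (a / 2 - 1) ∧
      ((Finset.Nat.antidiagonalTuple k a).filter
          (fun l : Fin k → ℕ => ∀ i, l i = 0 ∨ l i = 2)).card = k.choose (a / 2) :=
  card_even_tuples_asymptotics_general a hae
end
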